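/- Let (R, 𝔪) be a commutative local ring and φ an alternating 2n×2n matrix over R of Pfaffian 1, with n ≥ 2. Then E_φ(R) = E_{2n-1}(R). -/

import Mathlib

open Matrix

/-- A matrix is alternating: skew-symmetric with zero diagonal. -/
def IsAlternatingM {ι R : Type*} [CommRing R] (A : Matrix ι ι R) : Prop :=
  Aᵀ = -A ∧ ∀ i, A i i = 0

/-- The elementary group `E_k(R)`. -/
def ElemGroup (k : ℕ) (R : Type*) [CommRing R] : Subgroup (Matrix (Fin k) (Fin k) R)ˣ :=
  Subgroup.closure {u | ∃ (i j : Fin k) (a : R), i ≠ j ∧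
    (u : Matrix (Fin k) (Fin k) R) = 1 + Matrix.single i j a}

/-- The group `E_k(I)` generated by elementary matrices with parameter in `I`. -/
def ElemIdealGroup (k : ℕ) (R : Type*) [CommRing R] (I : Ideal R) :
    Subgroup (Matrix (Fin k) (Fin k) R)ˣ :=
  Subgroup.closure {u | ∃ (i j : Fin k) (a : R), i ≠ j ∧ a ∈ I ∧
    (u : Matrix (Fin k) (Fin k) R) = 1 + Matrix.single i j a}

/-- The relative elementary group `E_k(R, I)`: normal closure of `E_k(I)` in `E_k(R)`. -/
def ElemRelGroup (k : ℕ) (R : Type*) [CommRing R] (I : Ideal R) :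
    Subgroup (Matrix (Fin k) (Fin k) R)ˣ :=
  Subgroup.closure {u | ∃ g ∈ ElemGroup k R, ∃ e ∈ ElemIdealGroup k R I, u = g * e * g⁻¹}

/-- `α_φ(v) = I + dᵀ v ν`, where `φ = [[0,-c],[cᵀ,ν]]`, `φ⁻¹ = [[0,d],[-dᵀ,μ]]`. -/
noncomputable def alphaM {m : ℕ} {R : Type*} [CommRing R]
    (φ : Matrix (Fin 1 ⊕ Fin m) (Fin 1 ⊕ Fin m) R) (v : Matrix (Fin 1) (Fin m) R) :
    Matrix (Fin m) (Fin m) R :=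
  1 + (φ⁻¹.toBlocks₁₂)ᵀ * v * φ.toBlocks₂₂

/-- `β_φ(v) = I + μ vᵀ c`. -/
noncomputable def betaM {m : ℕ} {R : Type*} [CommRing R]
    (φ : Matrix (Fin 1 ⊕ Fin m) (Fin 1 ⊕ Fin m) R) (v : Matrix (Fin 1) (Fin m) R) :
    Matrix (Fin m) (Fin m) R :=
  1 + φ⁻¹.toBlocks₂₂ * vᵀ * (-φ.toBlocks₁₂)

/-- The group `E_φ(R)` generated by the `α_φ(v)` and `β_φ(v)`. -/
def EphiGroup {m : ℕ} {R : Type*} [CommRing R]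
    (φ : Matrix (Fin 1 ⊕ Fin m) (Fin 1 ⊕ Fin m) R) : Subgroup (Matrix (Fin m) (Fin m) R)ˣ :=
  Subgroup.closure {u | ∃ v, (u : Matrix (Fin m) (Fin m) R) = alphaM φ v ∨
    (u : Matrix (Fin m) (Fin m) R) = betaM φ v}

/-- `E_φ(I)`. -/
def EphiIdealGroup {m : ℕ} {R : Type*} [CommRing R]
    (φ : Matrix (Fin 1 ⊕ Fin m) (Fin 1 ⊕ Fin m) R) (I : Ideal R) :
    Subgroup (Matrix (Fin m) (Fin m) R)ˣ :=
  Subgroup.closure {u | ∃ v, (∀ j, v 0 j ∈ I) ∧ ((u : Matrix (Fin m) (Fin m) R) = alphaM φ v ∨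
    (u : Matrix (Fin m) (Fin m) R) = betaM φ v)}

/-- `E_φ(R, I)`: normal closure of `E_φ(I)` in `E_φ(R)`. -/
def EphiRelGroup {m : ℕ} {R : Type*} [CommRing R]
    (φ : Matrix (Fin 1 ⊕ Fin m) (Fin 1 ⊕ Fin m) R) (I : Ideal R) :
    Subgroup (Matrix (Fin m) (Fin m) R)ˣ :=
  Subgroup.closure {u | ∃ g ∈ EphiGroup φ, ∃ e ∈ EphiIdealGroup φ I, u = g * e * g⁻¹}

/-- `1 ⊥ ε = diag(1, ε)`. -/
def onePerp {m : ℕ} {R : Type*} [CommRing R] (ε : Matrix (Fin m) (Fin m) R) :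
    Matrix (Fin 1 ⊕ Fin m) (Fin 1 ⊕ Fin m) R :=
  Matrix.fromBlocks 1 0 0 ε

/-- The standard symplectic matrix `ψ_n` of size `2n`. -/
def psiMat (n : ℕ) (R : Type*) [CommRing R] : Matrix (Fin (2*n)) (Fin (2*n)) R :=
  Matrix.of fun i j =>
    if i.val % 2 = 0 ∧ j.val = i.val + 1 then 1
    else if i.val % 2 = 1 ∧ i.val = j.val + 1 then -1 else 0

def sumEquiv (n : ℕ) (h : 1 ≤ n) : (Fin 1 ⊕ Fin (2*n-1)) ≃ Fin (2*n) :=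
  finSumFinEquiv.trans (finCongr (by omega))

/-- `ψ_n` viewed with the `1 ⊕ (2n-1)` block indexing. -/
def psiB (n : ℕ) (h : 1 ≤ n) (R : Type*) [CommRing R] :
    Matrix (Fin 1 ⊕ Fin (2*n-1)) (Fin 1 ⊕ Fin (2*n-1)) R :=
  (psiMat n R).submatrix (sumEquiv n h) (sumEquiv n h)

/-- `1 ⊥ ρ` reindexed to size `2n`. -/
def onePerpBig {n : ℕ} (h : 1 ≤ n) {R : Type*} [CommRing R]
    (ρ : Matrix (Fin (2*n-1)) (Fin (2*n-1)) R) : Matrix (Fin (2*n)) (Fin (2*n)) R :=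
  (onePerp ρ).submatrix (sumEquiv n h).symm (sumEquiv n h).symm

/-- The Pfaffian, defined by expansion along the first row. -/
def pfaffian {R : Type*} [CommRing R] : (n : ℕ) → Matrix (Fin (2*n)) (Fin (2*n)) R → R
  | 0, _ => 1
  | n+1, A => ∑ j : Fin (2*n+1),
      (-1:R)^(j:ℕ) * A ⟨0, by omega⟩ (Fin.cast (by omega) j.succ) *
      pfaffian n (A.submatrix (fun k => Fin.cast (by omega) (Fin.succ (j.succAbove k)))
        (fun k => Fin.cast (by omega) (Fin.succ (j.succAbove k))))

/-- The permutation σ swapping `2i ↔ 2i+1` (0-indexed). -/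
def sigmaP {n : ℕ} (i : Fin (2*n)) : Fin (2*n) :=
  ⟨if i.val % 2 = 0 then i.val + 1 else i.val - 1, by have := i.isLt; split <;> omega⟩

/-- Elementary symplectic generator `se_{ij}(z)`. -/
def seMat {n : ℕ} {R : Type*} [CommRing R] (i j : Fin (2*n)) (z : R) :
    Matrix (Fin (2*n)) (Fin (2*n)) R :=
  if i = sigmaP j then 1 + Matrix.single i j z
  else 1 + Matrix.single i j z
       - Matrix.single (sigmaP j) (sigmaP i) ((-1:R)^((i:ℕ)+(j:ℕ)) * z)

/-- The elementary symplectic group `ESp_{2n}(R)`. -/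
def ESpGroup (n : ℕ) (R : Type*) [CommRing R] : Subgroup (Matrix (Fin (2*n)) (Fin (2*n)) R)ˣ :=
  Subgroup.closure {u | ∃ (i j : Fin (2*n)) (z : R), i ≠ j ∧
    (u : Matrix (Fin (2*n)) (Fin (2*n)) R) = seMat i j z}


/-! ### Auxiliary machinery -/

section Helpers

variable {R : Type*} [CommRing R] {m : ℕ}

/-- row-type rank one matrix: nonzero only in row `p`, with entries `w`. -/
def Urow (p : Fin m) (w : Fin m → R) : Matrix (Fin m) (Fin m) R :=
  Matrix.of fun i j => if i = p then w j else 0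

/-- column-type rank one matrix: nonzero only in column `p`. -/
def Vcol (p : Fin m) (w : Fin m → R) : Matrix (Fin m) (Fin m) R :=
  Matrix.of fun i j => if j = p then w i else 0

lemma Urow_apply (p : Fin m) (w : Fin m → R) (i j) :
    Urow p w i j = if i = p then w j else 0 := rfl

lemma Vcol_apply (p : Fin m) (w : Fin m → R) (i j) :
    Vcol p w i j = if j = p then w i else 0 := rfl

lemma Vcol_transpose (p : Fin m) (w : Fin m → R) : (Vcol p w)ᵀ = Urow p w := by
  ext i j; rfl

lemma Urow_mul_std (p k : Fin m) (w : Fin m → R) (hw : w p = 0) (x : R) :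
    Urow p w * Matrix.single p k x = 0 := by
  ext i j
  simp only [Matrix.mul_apply, Urow_apply, Matrix.single, Matrix.of_apply,
    Matrix.zero_apply]
  split
  · rw [Finset.sum_eq_single p] <;> simp_all [eq_comm]
  · simp

lemma std_mul_Vcol (p k : Fin m) (w : Fin m → R) (hw : w p = 0) (x : R) :
    Matrix.single k p x * Vcol p w = 0 := by
  ext i j
  simp only [Matrix.mul_apply, Vcol_apply, Matrix.single, Matrix.of_apply,
    Matrix.zero_apply]
  split
  · rw [Finset.sum_eq_single p] <;> simp_all [eq_comm]
  · simp

lemma exU (p : Fin m) (w : Fin m → R) (hw : w p = 0) :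
    ∃ u ∈ ElemGroup m R, (u : Matrix (Fin m) (Fin m) R) = 1 + Urow p w := by
  suffices H : ∀ s : Finset (Fin m), ∀ w : Fin m → R, w p = 0 → (∀ j ∉ s, w j = 0) →
      ∃ u ∈ ElemGroup m R, (u : Matrix (Fin m) (Fin m) R) = 1 + Urow p w by
    exact H Finset.univ w hw (by simp)
  intro s
  induction s using Finset.induction_on with
  | empty =>
    intro w h0 hs
    refine ⟨1, Subgroup.one_mem _, ?_⟩
    have hz : Urow p w = 0 := by
      ext i j; simp [Urow_apply, hs j (Finset.notMem_empty j)]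
    simp [hz]
  | @insert k s hk ih =>
    intro w h0 hs
    by_cases hkp : k = p
    · refine ih w h0 (fun j hj => ?_)
      by_cases hjk : j = k
      · rw [hjk, hkp]; exact h0
      · exact hs j (by simp [Finset.mem_insert, hj, hjk])
    · set w' := Function.update w k 0 with hw'
      have h0' : w' p = 0 := by
        simp [hw', Function.update_apply, h0, fun h : p = k => hkp h.symm]
      obtain ⟨u', hu', hval⟩ := ih w' h0' (fun j hj => by
        by_cases hjk : j = k
        · simp [hw', hjk]
        · simp only [hw', Function.update_apply, hjk, if_false]
          exact hs j (by simp [Finset.mem_insert, hj, hjk]))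
      have hpk : p ≠ k := fun h => hkp h.symm
      have hmul1 : Matrix.single p k (w k) * Matrix.single p k (-(w k)) = 0 :=
        Matrix.single_mul_single_of_ne (c := (w k)) p k _ hkp _
      have hmul2 : Matrix.single p k (-(w k)) * Matrix.single p k (w k) = 0 :=
        Matrix.single_mul_single_of_ne (c := (-(w k))) p k _ hkp _
      have hsum : Matrix.single p k (w k) + Matrix.single p k (-(w k)) = 0 := by
        rw [← Matrix.single_add, add_neg_cancel, Matrix.single_zero]
      have he1 : (1 + Matrix.single p k (w k)) * (1 + Matrix.single p k (-(w k))) = 1 := by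
        have : (1 + Matrix.single p k (w k)) * (1 + Matrix.single p k (-(w k))) =
            1 + ((Matrix.single p k (w k) + Matrix.single p k (-(w k))) +
              Matrix.single p k (w k) * Matrix.single p k (-(w k))) := by noncomm_ring
        rw [this, hsum, hmul1]; simp
      have he2 : (1 + Matrix.single p k (-(w k))) * (1 + Matrix.single p k (w k)) = 1 := by
        have : (1 + Matrix.single p k (-(w k))) * (1 + Matrix.single p k (w k)) =
            1 + ((Matrix.single p k (-(w k)) + Matrix.single p k (w k)) +
              Matrix.single p k (-(w k)) * Matrix.single p k (w k)) := by noncomm_ring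
        rw [this, add_comm (Matrix.single p k (-(w k))), hsum, hmul2]; simp
      let e : (Matrix (Fin m) (Fin m) R)ˣ :=
        ⟨1 + Matrix.single p k (w k), 1 + Matrix.single p k (-(w k)), he1, he2⟩
      have hmem : e ∈ ElemGroup m R := Subgroup.subset_closure ⟨p, k, w k, hpk, rfl⟩
      refine ⟨u' * e, Subgroup.mul_mem _ hu' hmem, ?_⟩
      have hval2 : ((u' * e : (Matrix (Fin m) (Fin m) R)ˣ) : Matrix (Fin m) (Fin m) R) =
          (1 + Urow p w') * (1 + Matrix.single p k (w k)) := by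
        rw [Units.val_mul, hval]
      rw [hval2]
      have hcross : Urow p w' * Matrix.single p k (w k) = 0 :=
        Urow_mul_std p k w' h0' (w k)
      have : (1 + Urow p w') * (1 + Matrix.single p k (w k)) =
          1 + (Urow p w' + Matrix.single p k (w k) + Urow p w' * Matrix.single p k (w k)) := by
        noncomm_ring
      rw [this, hcross, add_zero]
      congr 1
      ext i j
      simp only [Matrix.add_apply, Urow_apply, Matrix.single, Matrix.of_apply, hw',
        Function.update_apply]
      by_cases hip : p = i <;> by_cases hjk : k = j <;> simp [hip, hjk, eq_comm]

lemma exV (p : Fin m) (w : Fin m → R) (hw : w p = 0) :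
    ∃ u ∈ ElemGroup m R, (u : Matrix (Fin m) (Fin m) R) = 1 + Vcol p w := by
  suffices H : ∀ s : Finset (Fin m), ∀ w : Fin m → R, w p = 0 → (∀ j ∉ s, w j = 0) →
      ∃ u ∈ ElemGroup m R, (u : Matrix (Fin m) (Fin m) R) = 1 + Vcol p w by
    exact H Finset.univ w hw (by simp)
  intro s
  induction s using Finset.induction_on with
  | empty =>
    intro w h0 hs
    refine ⟨1, Subgroup.one_mem _, ?_⟩
    have hz : Vcol p w = 0 := by
      ext i j; simp [Vcol_apply, hs i (Finset.notMem_empty i)]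
    simp [hz]
  | @insert k s hk ih =>
    intro w h0 hs
    by_cases hkp : k = p
    · refine ih w h0 (fun j hj => ?_)
      by_cases hjk : j = k
      · rw [hjk, hkp]; exact h0
      · exact hs j (by simp [Finset.mem_insert, hj, hjk])
    · set w' := Function.update w k 0 with hw'
      have h0' : w' p = 0 := by
        simp [hw', Function.update_apply, h0, fun h : p = k => hkp h.symm]
      obtain ⟨u', hu', hval⟩ := ih w' h0' (fun j hj => by
        by_cases hjk : j = k
        · simp [hw', hjk]
        · simp only [hw', Function.update_apply, hjk, if_false]
          exact hs j (by simp [Finset.mem_insert, hj, hjk]))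
      have hkp' : k ≠ p := hkp
      have hmul1 : Matrix.single k p (w k) * Matrix.single k p (-(w k)) = 0 :=
        Matrix.single_mul_single_of_ne (c := (w k)) k p _ (fun h => hkp h.symm) _
      have hmul2 : Matrix.single k p (-(w k)) * Matrix.single k p (w k) = 0 :=
        Matrix.single_mul_single_of_ne (c := (-(w k))) k p _ (fun h => hkp h.symm) _
      have hsum : Matrix.single k p (w k) + Matrix.single k p (-(w k)) = 0 := by
        rw [← Matrix.single_add, add_neg_cancel, Matrix.single_zero]
      have he1 : (1 + Matrix.single k p (w k)) * (1 + Matrix.single k p (-(w k))) = 1 := by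
        have : (1 + Matrix.single k p (w k)) * (1 + Matrix.single k p (-(w k))) =
            1 + ((Matrix.single k p (w k) + Matrix.single k p (-(w k))) +
              Matrix.single k p (w k) * Matrix.single k p (-(w k))) := by noncomm_ring
        rw [this, hsum, hmul1]; simp
      have he2 : (1 + Matrix.single k p (-(w k))) * (1 + Matrix.single k p (w k)) = 1 := by
        have : (1 + Matrix.single k p (-(w k))) * (1 + Matrix.single k p (w k)) =
            1 + ((Matrix.single k p (-(w k)) + Matrix.single k p (w k)) +
              Matrix.single k p (-(w k)) * Matrix.single k p (w k)) := by noncomm_ring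
        rw [this, add_comm (Matrix.single k p (-(w k))), hsum, hmul2]; simp
      let e : (Matrix (Fin m) (Fin m) R)ˣ :=
        ⟨1 + Matrix.single k p (w k), 1 + Matrix.single k p (-(w k)), he1, he2⟩
      have hmem : e ∈ ElemGroup m R := Subgroup.subset_closure ⟨k, p, w k, hkp', rfl⟩
      refine ⟨e * u', Subgroup.mul_mem _ hmem hu', ?_⟩
      have hval2 : ((e * u' : (Matrix (Fin m) (Fin m) R)ˣ) : Matrix (Fin m) (Fin m) R) =
          (1 + Matrix.single k p (w k)) * (1 + Vcol p w') := by
        rw [Units.val_mul, hval]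
      rw [hval2]
      have hcross : Matrix.single k p (w k) * Vcol p w' = 0 :=
        std_mul_Vcol p k w' h0' (w k)
      have : (1 + Matrix.single k p (w k)) * (1 + Vcol p w') =
          1 + (Vcol p w' + Matrix.single k p (w k) + Matrix.single k p (w k) * Vcol p w') := by
        noncomm_ring
      rw [this, hcross, add_zero]
      congr 1
      ext i j
      simp only [Matrix.add_apply, Vcol_apply, Matrix.single, Matrix.of_apply, hw',
        Function.update_apply]
      by_cases hjp : p = j <;> by_cases hik : k = i <;> simp [hjp, hik, eq_comm]


lemma qzero {ι : Type*} [Fintype ι] (A : Matrix ι ι R) (h1 : Aᵀ = -A)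
    (h2 : ∀ i, A i i = 0) (x : ι → R) : ∑ k, ∑ l, x k * A k l * x l = 0 := by
  have hA : ∀ k l, A l k = -A k l := fun k l => by
    have := congrFun (congrFun h1 k) l
    simpa [Matrix.transpose_apply] using this
  rw [← Finset.sum_product']
  refine Finset.sum_involution (fun p _ => (p.2, p.1)) ?_ ?_ ?_ ?_
  · intro p _
    show x p.1 * A p.1 p.2 * x p.2 + x p.2 * A p.2 p.1 * x p.1 = 0
    rw [hA p.1 p.2]; ring
  · intro p _ hf hcon
    apply hf
    have h12 : p.2 = p.1 := congrArg Prod.fst hcon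
    show x p.1 * A p.1 p.2 * x p.2 = 0
    rw [← h12, h2 p.2, mul_zero, zero_mul]
  · intro p _; simp
  · intro p _; rfl

lemma alternating_conj {ι : Type*} [Fintype ι] (A g : Matrix ι ι R) (h : IsAlternatingM A) :
    IsAlternatingM (gᵀ * A * g) := by
  constructor
  · have : (gᵀ * A * g)ᵀ = gᵀ * Aᵀ * g := by
      rw [Matrix.transpose_mul, Matrix.transpose_mul, Matrix.transpose_transpose,
        Matrix.mul_assoc]
    rw [this, h.1, Matrix.mul_neg, Matrix.neg_mul]
  · intro i
    have e1 : (gᵀ * A * g) i i = ∑ l, (∑ k, g k i * A k l) * g l i := by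
      simp [Matrix.mul_apply, Matrix.transpose_apply]
    have e2 : ∑ l, (∑ k, g k i * A k l) * g l i = ∑ k, ∑ l, g k i * A k l * g l i := by
      rw [Finset.sum_comm]
      exact Finset.sum_congr rfl fun l _ => by rw [Finset.sum_mul]
    rw [e1, e2, qzero A h.1 h.2 (fun k => g k i)]

lemma mul_one_add_Urow (c : Matrix (Fin 1) (Fin m) R) (p : Fin m) (w : Fin m → R) :
    c * (1 + Urow p w) = c + Matrix.of fun (_ : Fin 1) j => c 0 p * w j := by
  have hz : c * Urow p w = Matrix.of fun (_ : Fin 1) j => c 0 p * w j := by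
    ext i j
    have hi : i = 0 := Subsingleton.elim _ _
    subst hi
    rw [Matrix.mul_apply, Finset.sum_eq_single p] <;> simp [Urow_apply]
    intro b hb; simp [hb]
  rw [Matrix.mul_add, Matrix.mul_one, hz]

lemma stage1 [NeZero m] (h01 : (0 : Fin m) ≠ 1)
    (c : Matrix (Fin 1) (Fin m) R) (huni : ∃ k, IsUnit (c 0 k)) :
    ∃ ε ∈ ElemGroup m R, c * (ε : Matrix (Fin m) (Fin m) R) =
      Matrix.of fun _ j => if j = 0 then (-1 : R) else 0 := by
  have H : ∀ c : Matrix (Fin 1) (Fin m) R, (∃ k, k ≠ 1 ∧ IsUnit (c 0 k)) →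
      ∃ ε ∈ ElemGroup m R, c * (ε : Matrix (Fin m) (Fin m) R) =
        Matrix.of fun _ j => if j = 0 then (-1 : R) else 0 := by
    rintro c ⟨k, hk1, hk⟩
    set x₁ : R := (1 - c 0 1) * ((hk.unit⁻¹ : Rˣ) : R) with hx₁
    obtain ⟨ε₁, hε₁m, hε₁v⟩ := exU k (Pi.single 1 x₁) (Pi.single_eq_of_ne hk1 _)
    set c₁ : Matrix (Fin 1) (Fin m) R := c * (ε₁ : Matrix (Fin m) (Fin m) R) with hc₁
    have hc₁e : c₁ = c + Matrix.of fun _ j => c 0 k * (Pi.single 1 x₁ : Fin m → R) j := by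
      rw [hc₁, hε₁v, mul_one_add_Urow]
    have hkinv : c 0 k * ((hk.unit⁻¹ : Rˣ) : R) = 1 := hk.mul_val_inv
    have hx : c 0 k * x₁ = 1 - c 0 1 := by
      calc c 0 k * x₁ = c 0 k * ((hk.unit⁻¹ : Rˣ) : R) * (1 - c 0 1) := by rw [hx₁]; ring
        _ = 1 - c 0 1 := by rw [hkinv, one_mul]
    have hc₁1 : c₁ 0 1 = 1 := by
      rw [hc₁e]
      simp only [Matrix.add_apply, Matrix.of_apply, Pi.single_eq_same, hx]
      ring
    have hc₁j : ∀ j, j ≠ 1 → c₁ 0 j = c 0 j := by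
      intro j hj
      rw [hc₁e]
      simp [Pi.single_eq_of_ne hj]
    set w₂ : Fin m → R := fun j => if j = 1 then 0 else (if j = 0 then (-1 : R) else 0) - c₁ 0 j
      with hw₂
    obtain ⟨ε₂, hε₂m, hε₂v⟩ := exU 1 w₂ (by simp [hw₂])
    set c₂ : Matrix (Fin 1) (Fin m) R := c₁ * (ε₂ : Matrix (Fin m) (Fin m) R) with hc₂
    have hc₂e : c₂ = c₁ + Matrix.of fun _ j => c₁ 0 1 * w₂ j := by
      rw [hc₂, hε₂v, mul_one_add_Urow]
    have hc₂j : ∀ j, c₂ 0 j = if j = 1 then 1 else if j = 0 then (-1 : R) else 0 := by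
      intro j
      rw [hc₂e]
      by_cases hj1 : j = 1
      · simp [hj1, hw₂, hc₁1]
      · simp only [Matrix.add_apply, Matrix.of_apply, hw₂, hj1, if_false, hc₁1, one_mul]
        ring
    obtain ⟨ε₃, hε₃m, hε₃v⟩ := exU 0 (Pi.single 1 (1 : R)) (Pi.single_eq_of_ne h01 _)
    refine ⟨ε₁ * ε₂ * ε₃, Subgroup.mul_mem _ (Subgroup.mul_mem _ hε₁m hε₂m) hε₃m, ?_⟩
    have : c * ((ε₁ * ε₂ * ε₃ : (Matrix (Fin m) (Fin m) R)ˣ) : Matrix (Fin m) (Fin m) R) =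
        c₂ * (ε₃ : Matrix (Fin m) (Fin m) R) := by
      rw [Units.val_mul, Units.val_mul, hc₂, hc₁]
      simp [Matrix.mul_assoc]
    rw [this, hε₃v, mul_one_add_Urow]
    ext i j
    have hi : i = 0 := Subsingleton.elim _ _
    subst hi
    by_cases hj1 : j = 1
    · subst hj1
      simp only [Matrix.add_apply, Matrix.of_apply, Pi.single_eq_same, hc₂j]
      simp [Ne.symm h01, h01]
    · simp only [Matrix.add_apply, Matrix.of_apply, Pi.single_eq_of_ne hj1, hc₂j, hj1,
        if_false, mul_zero, add_zero]
  obtain ⟨k, hk⟩ := huni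
  by_cases hex : ∃ k, k ≠ 1 ∧ IsUnit (c 0 k)
  · exact H c hex
  · push_neg at hex
    have hk1 : IsUnit (c 0 1) := by
      rcases eq_or_ne k 1 with h | h
      · exact h ▸ hk
      · exact absurd hk (hex k h)
    set x₀ : R := (1 - c 0 0) * ((hk1.unit⁻¹ : Rˣ) : R) with hx₀
    obtain ⟨ε₀, hε₀m, hε₀v⟩ := exU 1 (Pi.single 0 x₀) (Pi.single_eq_of_ne (Ne.symm h01) _)
    set c' : Matrix (Fin 1) (Fin m) R := c * (ε₀ : Matrix (Fin m) (Fin m) R) with hc'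
    have hc'e : c' = c + Matrix.of fun _ j => c 0 1 * (Pi.single 0 x₀ : Fin m → R) j := by
      rw [hc', hε₀v, mul_one_add_Urow]
    have hinv : c 0 1 * ((hk1.unit⁻¹ : Rˣ) : R) = 1 := hk1.mul_val_inv
    have hc'0 : c' 0 0 = 1 := by
      rw [hc'e]
      simp only [Matrix.add_apply, Matrix.of_apply, Pi.single_eq_same]
      calc c 0 0 + c 0 1 * x₀ = c 0 0 + c 0 1 * ((hk1.unit⁻¹ : Rˣ) : R) * (1 - c 0 0) := by
            rw [hx₀]; ring
        _ = 1 := by rw [hinv]; ring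
    obtain ⟨ε', hm', hv'⟩ := H c' ⟨0, h01, by rw [hc'0]; exact isUnit_one⟩
    refine ⟨ε₀ * ε', Subgroup.mul_mem _ hε₀m hm', ?_⟩
    rw [Units.val_mul, ← Matrix.mul_assoc, ← hc', hv']


/-- The standard row `(1,0,...,0)`. -/
def rrM (m : ℕ) (R : Type*) [CommRing R] [NeZero m] : Matrix (Fin 1) (Fin m) R :=
  Matrix.of fun _ j => if j = 0 then 1 else 0

section Key

variable [NeZero m]

lemma rrT_mul (g : Matrix (Fin 1) (Fin m) R) : (rrM m R)ᵀ * g = Urow 0 (g 0) := by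
  ext i j
  rw [Matrix.mul_apply, Fin.sum_univ_one]
  simp only [Matrix.transpose_apply, rrM, Matrix.of_apply, Urow_apply]
  split <;> simp

lemma mul_rr (u : Matrix (Fin m) (Fin 1) R) :
    u * rrM m R = Vcol 0 (fun i => u i 0) := by
  ext i j
  rw [Matrix.mul_apply, Fin.sum_univ_one]
  simp only [rrM, Matrix.of_apply, Vcol_apply]
  split <;> simp

lemma rr_mul (T : Matrix (Fin m) (Fin m) R) :
    rrM m R * T = Matrix.of fun (_ : Fin 1) j => T 0 j := by
  ext i j
  rw [Matrix.mul_apply, Finset.sum_eq_single 0] <;> simp [rrM]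
  intro b hb; simp [hb]

lemma Urow_neg (p : Fin m) (w : Fin m → R) : -(Urow p w) = Urow p (fun j => -(w j)) := by
  ext i j; simp only [Matrix.neg_apply, Urow_apply]; split <;> simp

lemma Vcol_neg (p : Fin m) (w : Fin m → R) : -(Vcol p w) = Vcol p (fun i => -(w i)) := by
  ext i j; simp only [Matrix.neg_apply, Vcol_apply]; split <;> simp

lemma rrT_mul_rr : (rrM m R)ᵀ * rrM m R = Matrix.single (0 : Fin m) 0 (1 : R) := by
  ext i j
  rw [Matrix.mul_apply, Fin.sum_univ_one]
  simp only [Matrix.transpose_apply, rrM, Matrix.of_apply, Matrix.single]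
  by_cases hi : i = 0 <;> by_cases hj : j = 0 <;> simp [hi, hj, eq_comm]

theorem keyLC (ν : Matrix (Fin m) (Fin m) R) (hνr : ∀ j, ν 0 j = 0) (hνc : ∀ i, ν i 0 = 0)
    (hU : IsUnit (fromBlocks 0 (rrM m R) (-(rrM m R)ᵀ) ν)) :
    EphiGroup (fromBlocks 0 (rrM m R) (-(rrM m R)ᵀ) ν) = ElemGroup m R := by
  set r := rrM m R with hr
  set φ₀ := fromBlocks (0 : Matrix (Fin 1) (Fin 1) R) r (-rᵀ) ν with hφ₀
  have hdet : IsUnit φ₀.det := (Matrix.isUnit_iff_isUnit_det _).1 hU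
  have h1 : φ₀ * φ₀⁻¹ = 1 := Matrix.mul_nonsing_inv _ hdet
  have h2 : φ₀⁻¹ * φ₀ = 1 := Matrix.nonsing_inv_mul _ hdet
  set P := φ₀⁻¹.toBlocks₁₁ with hP
  set Q := φ₀⁻¹.toBlocks₁₂ with hQ
  set S := φ₀⁻¹.toBlocks₂₁ with hS
  set T := φ₀⁻¹.toBlocks₂₂ with hT
  have hΞ : φ₀⁻¹ = fromBlocks P Q S T := (Matrix.fromBlocks_toBlocks _).symm
  rw [hφ₀, hΞ] at h1 h2
  rw [Matrix.fromBlocks_multiply] at h1 h2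
  rw [← Matrix.fromBlocks_one] at h1 h2
  have e12 : r * T = 0 := by
    have := congrArg Matrix.toBlocks₁₂ h1
    simpa only [Matrix.toBlocks_fromBlocks₁₂, Matrix.zero_mul, zero_add] using this
  have e22 : (-rᵀ) * Q + ν * T = 1 := by
    have := congrArg Matrix.toBlocks₂₂ h1
    simpa only [Matrix.toBlocks_fromBlocks₂₂] using this
  have f22 : S * r + T * ν = 1 := by
    have := congrArg Matrix.toBlocks₂₂ h2
    simpa only [Matrix.toBlocks_fromBlocks₂₂] using this
  -- row 0 of T vanishes
  have hT0 : ∀ j, T 0 j = 0 := by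
    intro j
    have := congrFun (congrFun e12 0) j
    rwa [rr_mul] at this
  -- Q = -r
  have hQr : Q = -r := by
    ext i j
    have hi : i = 0 := Subsingleton.elim _ _
    subst hi
    have := congrFun (congrFun e22 0) j
    have hsum1 : ∑ k : Fin 1, (-rᵀ) 0 k * Q k j = -Q 0 j := by
      rw [Fin.sum_univ_one]
      simp [hr, rrM]
    have hsum2 : ∑ k, ν 0 k * T k j = 0 :=
      Finset.sum_eq_zero fun k _ => by rw [hνr k, zero_mul]
    rw [Matrix.add_apply, Matrix.mul_apply, Matrix.mul_apply, hsum1, hsum2, add_zero,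
      Matrix.one_apply] at this
    rw [neg_eq_iff_eq_neg] at this
    rw [this]
    simp [hr, rrM, eq_comm]
  -- S = rᵀ
  have hSr : S = rᵀ := by
    ext i j
    have hj : j = 0 := Subsingleton.elim _ _
    subst hj
    have := congrFun (congrFun f22 i) 0
    have hsum1 : ∑ k : Fin 1, S i k * r k 0 = S i 0 := by
      rw [Fin.sum_univ_one]
      simp [hr, rrM]
    have hsum2 : ∑ k, T i k * ν k 0 = 0 :=
      Finset.sum_eq_zero fun k _ => by rw [hνc k, mul_zero]
    rw [Matrix.add_apply, Matrix.mul_apply, Matrix.mul_apply, hsum1, hsum2, add_zero,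
      Matrix.one_apply] at this
    rw [this]
    simp [hr, rrM]
  -- T * ν = 1 - E₀₀
  have hTν : T * ν = 1 - Matrix.single (0 : Fin m) 0 (1 : R) := by
    have : T * ν = 1 - S * r := by rw [← f22]; abel
    rw [this, hSr, hr, rrT_mul_rr]
  -- formulas for the generators
  have hαval : ∀ v, alphaM φ₀ v = 1 + Urow 0 (fun j => -((v * ν) 0 j)) := by
    intro v
    show (1 : Matrix (Fin m) (Fin m) R) + (φ₀⁻¹.toBlocks₁₂)ᵀ * v * φ₀.toBlocks₂₂ = _
    rw [← hQ, hQr]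
    have hblk : φ₀.toBlocks₂₂ = ν := by rw [hφ₀, Matrix.toBlocks_fromBlocks₂₂]
    rw [hblk]
    have : (-r)ᵀ * v * ν = -(rᵀ * (v * ν)) := by
      rw [Matrix.transpose_neg, Matrix.neg_mul, Matrix.neg_mul, Matrix.mul_assoc]
    rw [this, hr, rrT_mul, Urow_neg]
  have hβval : ∀ v, betaM φ₀ v = 1 + Vcol 0 (fun i => -((T * vᵀ) i 0)) := by
    intro v
    show (1 : Matrix (Fin m) (Fin m) R) + φ₀⁻¹.toBlocks₂₂ * vᵀ * (-φ₀.toBlocks₁₂) = _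
    rw [← hT]
    have hblk : φ₀.toBlocks₁₂ = r := by rw [hφ₀, Matrix.toBlocks_fromBlocks₁₂]
    rw [hblk]
    have : T * vᵀ * (-r) = -((T * vᵀ) * r) := by rw [Matrix.mul_neg]
    rw [this, hr, mul_rr, Vcol_neg]
  -- inclusion E_φ ≤ E_m
  refine le_antisymm ?_ ?_
  · rw [EphiGroup]
    refine Subgroup.closure_le _ |>.2 ?_
    rintro u ⟨v, hv | hv⟩
    · rw [hαval] at hv
      have hw0 : (fun j => -((v * ν) 0 j)) 0 = 0 := by
        simp only
        rw [Matrix.mul_apply, Finset.sum_eq_zero (fun k _ => by rw [hνc k, mul_zero])]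
        simp
      obtain ⟨u', hu', hval'⟩ := exU 0 (fun j => -((v * ν) 0 j)) hw0
      have : u = u' := Units.ext (by rw [hv, hval'])
      rw [this]; exact hu'
    · rw [hβval] at hv
      have hw0 : (fun i => -((T * vᵀ) i 0)) 0 = 0 := by
        simp only
        rw [Matrix.mul_apply, Finset.sum_eq_zero (fun k _ => by rw [hT0 k, zero_mul])]
        simp
      obtain ⟨u', hu', hval'⟩ := exV 0 (fun i => -((T * vᵀ) i 0)) hw0
      have : u = u' := Units.ext (by rw [hv, hval'])
      rw [this]; exact hu'
  -- inclusion E_m ≤ E_φ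
  · have memA : ∀ (b : Fin m), b ≠ 0 → ∀ (x : R) (u : (Matrix (Fin m) (Fin m) R)ˣ),
        (u : Matrix (Fin m) (Fin m) R) = 1 + Matrix.single 0 b x → u ∈ EphiGroup φ₀ := by
      intro b hb x u hval
      set srow : Matrix (Fin 1) (Fin m) R := Matrix.of fun _ j => if j = b then x else 0
        with hsrow
      refine Subgroup.subset_closure ⟨(-srow) * T, Or.inl ?_⟩
      rw [hαval]
      have hvν : ((-srow) * T) * ν = -srow := by
        rw [Matrix.neg_mul, Matrix.neg_mul, Matrix.mul_assoc, hTν, Matrix.mul_sub,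
          Matrix.mul_one]
        have hz : srow * Matrix.single (0 : Fin m) (0 : Fin m) (1 : R) = 0 := by
          ext i j
          rw [Matrix.mul_apply, Finset.sum_eq_single 0]
          · simp [hsrow, Matrix.single, Ne.symm hb]
          · intro k _ hk
            simp [Matrix.single, Ne.symm hk]
          · simp
        rw [sub_eq_self.mpr hz]
      rw [hval, hvν]
      congr 1
      ext i j
      simp only [Urow_apply, Matrix.single, Matrix.of_apply, Matrix.neg_apply, hsrow]
      by_cases hi : i = 0 <;> by_cases hjb : b = j <;> simp [hi, hjb, eq_comm]
    have memB : ∀ (a : Fin m), a ≠ 0 → ∀ (x : R) (u : (Matrix (Fin m) (Fin m) R)ˣ),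
        (u : Matrix (Fin m) (Fin m) R) = 1 + Matrix.single a 0 x → u ∈ EphiGroup φ₀ := by
      intro a ha x u hval
      set scol : Matrix (Fin m) (Fin 1) R := Matrix.of fun i _ => if i = a then x else 0
        with hscol
      refine Subgroup.subset_closure ⟨(-(ν * scol))ᵀ, Or.inr ?_⟩
      rw [hβval]
      have hvT : T * ((-(ν * scol))ᵀ)ᵀ = -scol := by
        rw [Matrix.transpose_transpose, Matrix.mul_neg, ← Matrix.mul_assoc, hTν,
          Matrix.sub_mul, Matrix.one_mul]
        have hz : Matrix.single (0 : Fin m) (0 : Fin m) (1 : R) * scol = 0 := by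
          ext i j
          rw [Matrix.mul_apply, Finset.sum_eq_single 0]
          · simp [hscol, Matrix.single, Ne.symm ha]
          · intro k _ hk
            simp [Matrix.single, hk, eq_comm]
          · simp
        rw [sub_eq_self.mpr hz]
      rw [hval, hvT]
      congr 1
      ext i j
      simp only [Vcol_apply, Matrix.single, Matrix.of_apply, Matrix.neg_apply, hscol]
      by_cases hj : j = 0 <;> by_cases hia : a = i <;> simp [hj, hia, eq_comm]
    rw [ElemGroup]
    refine Subgroup.closure_le _ |>.2 ?_
    rintro u ⟨i, j, a, hij, hval⟩
    by_cases hi : i = 0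
    · subst hi
      exact memA j (Ne.symm hij) a u hval
    by_cases hj : j = 0
    · subst hj
      exact memB i hi a u hval
    -- commutator case
    · set A := Matrix.single i (0 : Fin m) a with hA
      set A' := Matrix.single i (0 : Fin m) (-a) with hA'
      set B := Matrix.single (0 : Fin m) j (1 : R) with hB
      set B' := Matrix.single (0 : Fin m) j (-1 : R) with hB'
      set C := Matrix.single i j a with hC
      have hAA' : A * A' = 0 := by rw [hA, hA']; exact Matrix.single_mul_single_of_ne (c := a) i 0 _ (Ne.symm hi) (-a)
      have hA'A : A' * A = 0 := by rw [hA, hA']; exact Matrix.single_mul_single_of_ne (c := (-a)) i 0 _ (Ne.symm hi) a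
      have hBB' : B * B' = 0 := by rw [hB, hB']; exact Matrix.single_mul_single_of_ne (c := 1) 0 j _ hj (-1)
      have hB'B : B' * B = 0 := by rw [hB, hB']; exact Matrix.single_mul_single_of_ne (c := (-1)) 0 j _ hj 1
      have hAB : A * B = C := by rw [hA, hB, hC]; rw [Matrix.single_mul_single_same, mul_one]
      have hBA' : B * A' = 0 := by rw [hB, hA']; exact Matrix.single_mul_single_of_ne (c := 1) 0 j _ (Ne.symm hij) (-a)
      have hCA' : C * A' = 0 := by rw [hC, hA']; exact Matrix.single_mul_single_of_ne (c := a) i j _ (Ne.symm hij) (-a)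
      have hCB' : C * B' = 0 := by rw [hC, hB']; exact Matrix.single_mul_single_of_ne (c := a) i j _ hj (-1)
      have hAsum : A + A' = 0 := by
        rw [hA, hA', ← Matrix.single_add, add_neg_cancel, Matrix.single_zero]
      have hBsum : B + B' = 0 := by
        rw [hB, hB', ← Matrix.single_add, add_neg_cancel, Matrix.single_zero]
      have hg1e : (1 + A) * (1 + A') = 1 := by
        have : (1 + A) * (1 + A') = 1 + ((A + A') + A * A') := by noncomm_ring
        rw [this, hAsum, hAA']; simp
      have hg1e' : (1 + A') * (1 + A) = 1 := by
        have : (1 + A') * (1 + A) = 1 + ((A + A') + A' * A) := by noncomm_ring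
        rw [this, hAsum, hA'A]; simp
      have hg2e : (1 + B) * (1 + B') = 1 := by
        have : (1 + B) * (1 + B') = 1 + ((B + B') + B * B') := by noncomm_ring
        rw [this, hBsum, hBB']; simp
      have hg2e' : (1 + B') * (1 + B) = 1 := by
        have : (1 + B') * (1 + B) = 1 + ((B + B') + B' * B) := by noncomm_ring
        rw [this, hBsum, hB'B]; simp
      set g1 : (Matrix (Fin m) (Fin m) R)ˣ := ⟨1 + A, 1 + A', hg1e, hg1e'⟩ with hg1
      set g2 : (Matrix (Fin m) (Fin m) R)ˣ := ⟨1 + B, 1 + B', hg2e, hg2e'⟩ with hg2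
      have hm1 : g1 ∈ EphiGroup φ₀ := memB i hi a g1 rfl
      have hm2 : g2 ∈ EphiGroup φ₀ := memA j hj 1 g2 rfl
      have huval : u = g1 * g2 * g1⁻¹ * g2⁻¹ := by
        apply Units.ext
        rw [Units.val_mul, Units.val_mul, Units.val_mul, hval]
        have hv1 : ((g1⁻¹ : (Matrix (Fin m) (Fin m) R)ˣ) : Matrix (Fin m) (Fin m) R)
            = 1 + A' := rfl
        have hv2 : ((g2⁻¹ : (Matrix (Fin m) (Fin m) R)ˣ) : Matrix (Fin m) (Fin m) R)
            = 1 + B' := rfl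
        rw [hv1, hv2]
        have c1 : ((1 + A) * (1 + B) : Matrix (Fin m) (Fin m) R)
            = 1 + (A + B + A * B) := by noncomm_ring
        have c2 : ((1 + (A + B + C)) * (1 + A') : Matrix (Fin m) (Fin m) R)
            = 1 + (A + B + C) + A' + (A * A' + B * A' + C * A') := by noncomm_ring
        have c3 : ((1 + (B + C)) * (1 + B') : Matrix (Fin m) (Fin m) R)
            = 1 + (B + C) + B' + (B * B' + C * B') := by noncomm_ring
        show (1 : Matrix (Fin m) (Fin m) R) + C = (1 + A) * (1 + B) * (1 + A') * (1 + B')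
        rw [c1, hAB]
        rw [c2, hAA', hBA', hCA']
        have : (1 + (A + B + C) + A' + ((0 : Matrix (Fin m) (Fin m) R) + 0 + 0))
            = 1 + (B + C) + (A + A') := by abel
        rw [this, hAsum, add_zero]
        rw [c3, hBB', hCB']
        have : (1 + (B + C) + B' + ((0 : Matrix (Fin m) (Fin m) R) + 0))
            = 1 + C + (B + B') := by abel
        rw [this, hBsum, add_zero]
      rw [huval]
      exact Subgroup.mul_mem _ (Subgroup.mul_mem _ (Subgroup.mul_mem _ hm1 hm2)
        (Subgroup.inv_mem _ hm1)) (Subgroup.inv_mem _ hm2)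

end Key


section Conj

lemma onePerp_mul (a b : Matrix (Fin m) (Fin m) R) :
    onePerp a * onePerp b = onePerp (a * b) := by
  unfold onePerp
  rw [Matrix.fromBlocks_multiply]
  simp

lemma onePerp_one : onePerp (1 : Matrix (Fin m) (Fin m) R) = 1 := by
  unfold onePerp
  exact Matrix.fromBlocks_one

lemma onePerp_transpose (a : Matrix (Fin m) (Fin m) R) : (onePerp a)ᵀ = onePerp aᵀ := by
  unfold onePerp
  rw [Matrix.fromBlocks_transpose]
  simp

lemma isUnit_transpose {ι : Type*} [Fintype ι] [DecidableEq ι] {A : Matrix ι ι R}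
    (h : IsUnit A) : IsUnit Aᵀ := by
  rw [Matrix.isUnit_iff_isUnit_det] at h ⊢
  rwa [Matrix.det_transpose]

lemma isUnit_onePerp (ε : (Matrix (Fin m) (Fin m) R)ˣ) :
    IsUnit (onePerp (ε : Matrix (Fin m) (Fin m) R)) :=
  ⟨⟨onePerp (ε : Matrix (Fin m) (Fin m) R),
    onePerp ((ε⁻¹ : (Matrix (Fin m) (Fin m) R)ˣ) : Matrix (Fin m) (Fin m) R),
    by rw [onePerp_mul, Units.mul_inv, onePerp_one],
    by rw [onePerp_mul, Units.inv_mul, onePerp_one]⟩, rfl⟩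

lemma onePerp_inv (ε : (Matrix (Fin m) (Fin m) R)ˣ) :
    (onePerp (ε : Matrix (Fin m) (Fin m) R))⁻¹ =
      onePerp ((ε⁻¹ : (Matrix (Fin m) (Fin m) R)ˣ) : Matrix (Fin m) (Fin m) R) :=
  Matrix.inv_eq_right_inv (by rw [onePerp_mul, Units.mul_inv, onePerp_one])

lemma blocks_conj (g : Matrix (Fin m) (Fin m) R)
    (φ : Matrix (Fin 1 ⊕ Fin m) (Fin 1 ⊕ Fin m) R) :
    (onePerp g)ᵀ * φ * onePerp g =
      Matrix.fromBlocks φ.toBlocks₁₁ (φ.toBlocks₁₂ * g) (gᵀ * φ.toBlocks₂₁)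
        (gᵀ * φ.toBlocks₂₂ * g) := by
  conv_lhs => rw [← Matrix.fromBlocks_toBlocks φ]
  unfold onePerp
  rw [Matrix.fromBlocks_transpose, Matrix.fromBlocks_multiply, Matrix.fromBlocks_multiply]
  simp [Matrix.mul_assoc]

lemma blocks_conj' (g : Matrix (Fin m) (Fin m) R)
    (Ξ : Matrix (Fin 1 ⊕ Fin m) (Fin 1 ⊕ Fin m) R) :
    onePerp g * Ξ * (onePerp g)ᵀ =
      Matrix.fromBlocks Ξ.toBlocks₁₁ (Ξ.toBlocks₁₂ * gᵀ) (g * Ξ.toBlocks₂₁)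
        (g * Ξ.toBlocks₂₂ * gᵀ) := by
  conv_lhs => rw [← Matrix.fromBlocks_toBlocks Ξ]
  unfold onePerp
  rw [Matrix.fromBlocks_transpose, Matrix.fromBlocks_multiply, Matrix.fromBlocks_multiply]
  simp [Matrix.mul_assoc]

lemma Ephi_conj (φ : Matrix (Fin 1 ⊕ Fin m) (Fin 1 ⊕ Fin m) R)
    (ε : (Matrix (Fin m) (Fin m) R)ˣ) :
    EphiGroup ((onePerp (ε : Matrix (Fin m) (Fin m) R))ᵀ * φ *
        onePerp (ε : Matrix (Fin m) (Fin m) R)) =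
      Subgroup.map (MulAut.conj ε⁻¹).toMonoidHom (EphiGroup φ) := by
  set e : Matrix (Fin m) (Fin m) R := (ε : Matrix (Fin m) (Fin m) R) with he
  set e' : Matrix (Fin m) (Fin m) R := ((ε⁻¹ : (Matrix (Fin m) (Fin m) R)ˣ) :
    Matrix (Fin m) (Fin m) R) with he'
  have hee' : e * e' = 1 := Units.mul_inv ε
  have he'e : e' * e = 1 := Units.inv_mul ε
  set φ' := (onePerp e)ᵀ * φ * onePerp e with hφ'
  have hinv : φ'⁻¹ = onePerp e' * φ⁻¹ * (onePerp e')ᵀ := by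
    rw [hφ', Matrix.mul_inv_rev, Matrix.mul_inv_rev, onePerp_inv, ← Matrix.transpose_nonsing_inv,
      onePerp_inv, ← he', Matrix.mul_assoc]
  have hb12 : φ'.toBlocks₁₂ = φ.toBlocks₁₂ * e := by
    rw [hφ', blocks_conj, Matrix.toBlocks_fromBlocks₁₂]
  have hb22 : φ'.toBlocks₂₂ = eᵀ * φ.toBlocks₂₂ * e := by
    rw [hφ', blocks_conj, Matrix.toBlocks_fromBlocks₂₂]
  have hib12 : φ'⁻¹.toBlocks₁₂ = φ⁻¹.toBlocks₁₂ * e'ᵀ := by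
    rw [hinv, blocks_conj', Matrix.toBlocks_fromBlocks₁₂]
  have hib22 : φ'⁻¹.toBlocks₂₂ = e' * φ⁻¹.toBlocks₂₂ * e'ᵀ := by
    rw [hinv, blocks_conj', Matrix.toBlocks_fromBlocks₂₂]
  have hα : ∀ v, alphaM φ' v = e' * alphaM φ (v * eᵀ) * e := by
    intro v
    unfold alphaM
    rw [hib12, hb22]
    have hrhs : e' * (1 + (φ⁻¹.toBlocks₁₂)ᵀ * (v * eᵀ) * φ.toBlocks₂₂) * e =
        1 + e' * ((φ⁻¹.toBlocks₁₂)ᵀ * (v * eᵀ) * φ.toBlocks₂₂) * e := by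
      rw [Matrix.mul_add, Matrix.mul_one, Matrix.add_mul, he'e]
    rw [hrhs]
    congr 1
    rw [Matrix.transpose_mul, Matrix.transpose_transpose]
    simp only [Matrix.mul_assoc]
  have hβ : ∀ v, betaM φ' v = e' * betaM φ (v * e') * e := by
    intro v
    unfold betaM
    rw [hib22, hb12]
    have hrhs : e' * (1 + φ⁻¹.toBlocks₂₂ * (v * e')ᵀ * (-φ.toBlocks₁₂)) * e =
        1 + e' * (φ⁻¹.toBlocks₂₂ * (v * e')ᵀ * (-φ.toBlocks₁₂)) * e := by
      rw [Matrix.mul_add, Matrix.mul_one, Matrix.add_mul, he'e]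
    rw [hrhs]
    congr 1
    rw [Matrix.transpose_mul]
    simp only [Matrix.mul_neg, Matrix.neg_mul, Matrix.mul_assoc]
  have hset : {u : (Matrix (Fin m) (Fin m) R)ˣ |
        ∃ v, (u : Matrix (Fin m) (Fin m) R) = alphaM φ' v ∨
          (u : Matrix (Fin m) (Fin m) R) = betaM φ' v} =
      (⇑(MulAut.conj ε⁻¹).toMonoidHom) ''
        {u | ∃ v, (u : Matrix (Fin m) (Fin m) R) = alphaM φ v ∨
          (u : Matrix (Fin m) (Fin m) R) = betaM φ v} := by
    have hconj : ∀ w : (Matrix (Fin m) (Fin m) R)ˣ,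
        (((MulAut.conj ε⁻¹).toMonoidHom w : (Matrix (Fin m) (Fin m) R)ˣ) :
          Matrix (Fin m) (Fin m) R) = e' * (w : Matrix (Fin m) (Fin m) R) * e := by
      intro w
      simp [MulAut.conj, he, he']
    ext u
    constructor
    · rintro ⟨v, hv | hv⟩
      · refine ⟨ε * u * ε⁻¹, ⟨v * eᵀ, Or.inl ?_⟩, ?_⟩
        · rw [Units.val_mul, Units.val_mul, hv, hα]
          calc e * (e' * alphaM φ (v * eᵀ) * e) * e'
              = (e * e') * alphaM φ (v * eᵀ) * (e * e') := by simp [Matrix.mul_assoc]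
            _ = alphaM φ (v * eᵀ) := by rw [hee', Matrix.one_mul, Matrix.mul_one]
        · show (MulAut.conj ε⁻¹) (ε * u * ε⁻¹) = u
          simp [MulAut.conj]
          group
      · refine ⟨ε * u * ε⁻¹, ⟨v * e', Or.inr ?_⟩, ?_⟩
        · rw [Units.val_mul, Units.val_mul, hv, hβ]
          calc e * (e' * betaM φ (v * e') * e) * e'
              = (e * e') * betaM φ (v * e') * (e * e') := by simp [Matrix.mul_assoc]
            _ = betaM φ (v * e') := by rw [hee', Matrix.one_mul, Matrix.mul_one]
        · show (MulAut.conj ε⁻¹) (ε * u * ε⁻¹) = u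
          simp [MulAut.conj]
          group
    · rintro ⟨g, ⟨v, hv | hv⟩, rfl⟩
      · refine ⟨v * e'ᵀ, Or.inl ?_⟩
        rw [hconj, hv, hα]
        have : v * e'ᵀ * eᵀ = v := by
          rw [Matrix.mul_assoc, ← Matrix.transpose_mul, hee', Matrix.transpose_one,
            Matrix.mul_one]
        rw [this]
      · refine ⟨v * e, Or.inr ?_⟩
        rw [hconj, hv, hβ]
        have : v * e * e' = v := by rw [Matrix.mul_assoc, hee', Matrix.mul_one]
        rw [this]
  rw [EphiGroup, EphiGroup, hset, ← MonoidHom.map_closure]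

end Conj


lemma Urow_mul_apply (p : Fin m) (w : Fin m → R) (A : Matrix (Fin m) (Fin m) R) (i j : Fin m) :
    (Urow p w * A) i j = if i = p then ∑ k, w k * A k j else 0 := by
  rw [Matrix.mul_apply]
  by_cases h : i = p <;> simp [Urow_apply, h]

lemma mul_Vcol_apply (p : Fin m) (w : Fin m → R) (A : Matrix (Fin m) (Fin m) R) (i j : Fin m) :
    (A * Vcol p w) i j = if j = p then ∑ k, A i k * w k else 0 := by
  rw [Matrix.mul_apply]
  by_cases h : j = p <;> simp [Vcol_apply, h]

end Helpers

/-- over a local ring, for an invertible alternating `φ` of Pfaffian 1,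
`E_φ(R) = E_{2n-1}(R)`. -/
theorem stmt15 {R : Type*} [CommRing R] [IsLocalRing R] (n : ℕ) (hn : 2 ≤ n)
    (φ : Matrix (Fin 1 ⊕ Fin (2*n-1)) (Fin 1 ⊕ Fin (2*n-1)) R)
    (halt : IsAlternatingM φ) (hU : IsUnit φ)
    (hpf : pfaffian n (φ.submatrix (sumEquiv n (le_trans one_le_two hn)).symm
        (sumEquiv n (le_trans one_le_two hn)).symm) = 1) :
    EphiGroup φ = ElemGroup (2*n-1) R := by
  haveI : NeZero (2*n-1) := ⟨by omega⟩
  have h01 : (0 : Fin (2*n-1)) ≠ 1 := by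
    intro h
    have := Fin.one_eq_zero_iff.mp h.symm
    omega
  have hdet : IsUnit φ.det := (Matrix.isUnit_iff_isUnit_det φ).1 hU
  have hmulinv : φ * φ⁻¹ = 1 := Matrix.mul_nonsing_inv φ hdet
  have hone := congrFun (congrFun hmulinv (Sum.inl 0)) (Sum.inl 0)
  rw [Matrix.mul_apply, Matrix.one_apply_eq, Fintype.sum_sum_type, Fin.sum_univ_one,
    halt.2 (Sum.inl 0), zero_mul, zero_add] at hone
  have hex : ∃ k, IsUnit (φ.toBlocks₁₂ 0 k) := by
    by_contra hcon
    push_neg at hcon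
    have hmem : (1 : R) ∈ IsLocalRing.maximalIdeal R := by
      rw [← hone]
      refine Ideal.sum_mem _ ?_
      intro k _
      refine Ideal.mul_mem_right _ _ ?_
      exact (IsLocalRing.mem_maximalIdeal _).2 (hcon k)
    exact ((Ideal.ne_top_iff_one _).1 (IsLocalRing.maximalIdeal.isMaximal R).ne_top) hmem
  obtain ⟨k, hk⟩ := hex
  have hkneg : IsUnit ((-φ.toBlocks₁₂) 0 k) := by simpa using hk.neg
  obtain ⟨ε₁, hε₁m, hε₁v⟩ := stage1 h01 (-φ.toBlocks₁₂) ⟨k, hkneg⟩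
  have hBe₁ : φ.toBlocks₁₂ * (ε₁ : Matrix (Fin (2*n-1)) (Fin (2*n-1)) R) = rrM (2*n-1) R := by
    apply neg_injective
    rw [← Matrix.neg_mul, hε₁v]
    ext i j
    simp only [Matrix.of_apply, Matrix.neg_apply, rrM]
    split <;> simp
  set φ₁ := (onePerp ((ε₁ : Matrix (Fin (2*n-1)) (Fin (2*n-1)) R)))ᵀ * φ *
    onePerp ((ε₁ : Matrix (Fin (2*n-1)) (Fin (2*n-1)) R)) with hφ₁
  have halt₁ : IsAlternatingM φ₁ := alternating_conj φ _ halt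
  have hU₁ : IsUnit φ₁ := ((isUnit_transpose (isUnit_onePerp ε₁)).mul hU).mul (isUnit_onePerp ε₁)
  have hb12₁ : φ₁.toBlocks₁₂ = rrM (2*n-1) R := by
    rw [hφ₁, blocks_conj, Matrix.toBlocks_fromBlocks₁₂, hBe₁]
  set ν₁ := φ₁.toBlocks₂₂ with hν₁
  have hν₁sk : ν₁ᵀ = -ν₁ := by
    ext i j
    have h := congrFun (congrFun halt₁.1 (Sum.inr i)) (Sum.inr j)
    simpa [Matrix.transpose_apply, Matrix.neg_apply, hν₁, Matrix.toBlocks₂₂] using h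
  have hν₁dg : ∀ i, ν₁ i i = 0 := fun i => halt₁.2 (Sum.inr i)
  have hskew : ∀ a b, ν₁ a b = -(ν₁ b a) := by
    intro a b
    have := congrFun (congrFun hν₁sk b) a
    simpa [Matrix.transpose_apply] using this
  have hb21₁ : φ₁.toBlocks₂₁ = -(rrM (2*n-1) R)ᵀ := by
    ext i j
    have h := congrFun (congrFun halt₁.1 (Sum.inr i)) (Sum.inl j)
    have h2 : φ₁ (Sum.inl j) (Sum.inr i) = -(φ₁ (Sum.inr i) (Sum.inl j)) := by
      simpa [Matrix.transpose_apply, Matrix.neg_apply] using h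
    have h3 : φ₁ (Sum.inr i) (Sum.inl j) = -(φ₁ (Sum.inl j) (Sum.inr i)) := by
      rw [h2, neg_neg]
    show φ₁ (Sum.inr i) (Sum.inl j) = -((rrM (2*n-1) R)ᵀ i j)
    rw [h3]
    exact congrArg Neg.neg (congrFun (congrFun hb12₁ j) i)
  -- stage 2 setup
  have hdet₁ : IsUnit φ₁.det := (Matrix.isUnit_iff_isUnit_det _).1 hU₁
  set w : Fin (2*n-1) → R := fun i => -(ν₁ i 0) with hw
  set y : Fin 1 ⊕ Fin (2*n-1) → R := Sum.elim 0 w with hy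
  set x := φ₁⁻¹ *ᵥ y with hxdef
  have hx : φ₁ *ᵥ x = y := by
    rw [hxdef, Matrix.mulVec_mulVec, Matrix.mul_nonsing_inv _ hdet₁, Matrix.one_mulVec]
  set u : Fin (2*n-1) → R := x ∘ Sum.inr with hu
  set sc : R := x (Sum.inl 0) with hsc
  have hx' := hx
  rw [show φ₁ = Matrix.fromBlocks φ₁.toBlocks₁₁ φ₁.toBlocks₁₂ φ₁.toBlocks₂₁ φ₁.toBlocks₂₂ from
    (Matrix.fromBlocks_toBlocks φ₁).symm, Matrix.fromBlocks_mulVec] at hx'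
  have hA0 : φ₁.toBlocks₁₁ = 0 := by
    ext i j
    have hi : i = 0 := Subsingleton.elim _ _
    have hj : j = 0 := Subsingleton.elim _ _
    subst hi; subst hj
    exact halt₁.2 (Sum.inl 0)
  have hu0 : u 0 = 0 := by
    have hinl := congrFun hx' (Sum.inl 0)
    rw [hA0, hb12₁, hy] at hinl
    simp only [Sum.elim_inl, Matrix.zero_mulVec, Pi.add_apply, Pi.zero_apply, zero_add] at hinl
    have hval : (rrM (2*n-1) R *ᵥ (x ∘ Sum.inr)) 0 = u 0 := by
      simp [Matrix.mulVec, dotProduct, rrM, hu]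
    rw [hval] at hinl
    exact hinl
  have hF : ∀ i, ∑ j, ν₁ i j * u j = w i + (if i = 0 then sc else 0) := by
    intro i
    have h := congrFun hx' (Sum.inr i)
    rw [hb21₁, hy] at h
    simp only [Sum.elim_inr, Pi.add_apply] at h
    have h1 : ((-(rrM (2*n-1) R)ᵀ) *ᵥ (x ∘ Sum.inl)) i = -(if i = 0 then sc else 0) := by
      simp only [Matrix.mulVec, dotProduct, Fin.sum_univ_one, Matrix.neg_apply,
        Matrix.transpose_apply, rrM, Matrix.of_apply, Function.comp_apply, ← hsc]
      split <;> simp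
    rw [h1] at h
    have h2 : (ν₁ *ᵥ (x ∘ Sum.inr)) i = ∑ j, ν₁ i j * u j := by
      simp [Matrix.mulVec, dotProduct, hu]
    rw [h2] at h
    linear_combination h
  obtain ⟨ε₂, hε₂m, hε₂v⟩ := exV (0 : Fin (2*n-1)) u hu0
  set φ₂ := (onePerp ((ε₂ : Matrix (Fin (2*n-1)) (Fin (2*n-1)) R)))ᵀ * φ₁ *
    onePerp ((ε₂ : Matrix (Fin (2*n-1)) (Fin (2*n-1)) R)) with hφ₂
  have halt₂ : IsAlternatingM φ₂ := alternating_conj φ₁ _ halt₁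
  have hU₂ : IsUnit φ₂ := ((isUnit_transpose (isUnit_onePerp ε₂)).mul hU₁).mul (isUnit_onePerp ε₂)
  have hb12₂ : φ₂.toBlocks₁₂ = rrM (2*n-1) R := by
    rw [hφ₂, blocks_conj, Matrix.toBlocks_fromBlocks₁₂, hb12₁, hε₂v, Matrix.mul_add,
      Matrix.mul_one]
    have hz : rrM (2*n-1) R * Vcol 0 u = 0 := by
      ext i j
      rw [Matrix.mul_apply]
      simp only [rrM, Matrix.of_apply, Vcol_apply, ite_mul, one_mul, zero_mul, mul_ite,
        Matrix.zero_apply]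
      by_cases hj : j = 0
      · subst hj
        simp [hu0]
      · simp [hj]
    rw [hz, add_zero]
  have he₂T : ((ε₂ : Matrix (Fin (2*n-1)) (Fin (2*n-1)) R))ᵀ = 1 + Urow 0 u := by
    rw [hε₂v, Matrix.transpose_add, Matrix.transpose_one, Vcol_transpose]
  have hν₂e : φ₂.toBlocks₂₂ = ν₁ + Urow 0 u * ν₁ + ν₁ * Vcol 0 u +
      Urow 0 u * ν₁ * Vcol 0 u := by
    rw [hφ₂, blocks_conj, Matrix.toBlocks_fromBlocks₂₂, he₂T, hε₂v, ← hν₁]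
    noncomm_ring
  have hq : ∑ k, (∑ l, u l * ν₁ l k) * u k = 0 := by
    calc ∑ k, (∑ l, u l * ν₁ l k) * u k = ∑ k, ∑ l, u l * ν₁ l k * u k :=
          Finset.sum_congr rfl fun k _ => Finset.sum_mul _ _ _
      _ = ∑ l, ∑ k, u l * ν₁ l k * u k := Finset.sum_comm
      _ = 0 := qzero ν₁ hν₁sk hν₁dg u
  have hT1 : ∀ j, ∑ kk, u kk * ν₁ kk j = -(∑ kk, ν₁ j kk * u kk) := by
    intro j
    rw [← Finset.sum_neg_distrib]
    exact Finset.sum_congr rfl fun kk _ => by rw [hskew kk j]; ring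
  have hNr : ∀ j, φ₂.toBlocks₂₂ 0 j = 0 := by
    intro j
    rw [hν₂e]
    simp only [Matrix.add_apply, Urow_mul_apply, mul_Vcol_apply, eq_self_iff_true, if_true,
      hT1 j, hF j, hF 0, hq, hw]
    by_cases hj : j = 0
    · subst hj
      simp [hν₁dg]
    · simp only [hj, if_false]
      rw [hskew 0 j]
      ring
  have hNc : ∀ i, φ₂.toBlocks₂₂ i 0 = 0 := by
    intro i
    rw [hν₂e]
    simp only [Matrix.add_apply, Urow_mul_apply, mul_Vcol_apply, eq_self_iff_true, if_true,
      hT1 0, hF 0, hF i, hw]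
    by_cases hi : i = 0
    · subst hi
      simp only [eq_self_iff_true, if_true, hq]
      simp [hν₁dg]
    · simp only [hi, if_false, zero_mul, Finset.sum_const_zero, add_zero]
      ring
  have hA0₂ : φ₂.toBlocks₁₁ = 0 := by
    ext i j
    have hi : i = 0 := Subsingleton.elim _ _
    have hj : j = 0 := Subsingleton.elim _ _
    subst hi; subst hj
    exact halt₂.2 (Sum.inl 0)
  have hb21₂ : φ₂.toBlocks₂₁ = -(rrM (2*n-1) R)ᵀ := by
    ext i j
    have h := congrFun (congrFun halt₂.1 (Sum.inr i)) (Sum.inl j)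
    have h2 : φ₂ (Sum.inl j) (Sum.inr i) = -(φ₂ (Sum.inr i) (Sum.inl j)) := by
      simpa [Matrix.transpose_apply, Matrix.neg_apply] using h
    have h3 : φ₂ (Sum.inr i) (Sum.inl j) = -(φ₂ (Sum.inl j) (Sum.inr i)) := by
      rw [h2, neg_neg]
    show φ₂ (Sum.inr i) (Sum.inl j) = -((rrM (2*n-1) R)ᵀ i j)
    rw [h3]
    exact congrArg Neg.neg (congrFun (congrFun hb12₂ j) i)
  have hφ₂blocks : φ₂ = Matrix.fromBlocks 0 (rrM (2*n-1) R) (-(rrM (2*n-1) R)ᵀ)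
      φ₂.toBlocks₂₂ := by
    conv_lhs => rw [← Matrix.fromBlocks_toBlocks φ₂]
    rw [hA0₂, hb12₂, hb21₂]
  have hkey := keyLC (m := 2*n-1) φ₂.toBlocks₂₂ hNr hNc (by rw [← hφ₂blocks]; exact hU₂)
  rw [← hφ₂blocks] at hkey
  set ε := ε₁ * ε₂ with hε
  have hεm : ε ∈ ElemGroup (2*n-1) R := Subgroup.mul_mem _ hε₁m hε₂m
  have hφ₂ε : φ₂ = (onePerp ((ε : Matrix (Fin (2*n-1)) (Fin (2*n-1)) R)))ᵀ * φ *
      onePerp ((ε : Matrix (Fin (2*n-1)) (Fin (2*n-1)) R)) := by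
    rw [hφ₂, hφ₁, hε, Units.val_mul, ← onePerp_mul, Matrix.transpose_mul]
    simp [Matrix.mul_assoc]
  have hconj := Ephi_conj φ ε
  rw [← hφ₂ε] at hconj
  have hEq : Subgroup.map (MulAut.conj ε⁻¹).toMonoidHom (EphiGroup φ) = ElemGroup (2*n-1) R := by
    rw [← hconj, hkey]
  have hcomp : Subgroup.map (MulAut.conj ε).toMonoidHom
      (Subgroup.map (MulAut.conj ε⁻¹).toMonoidHom (EphiGroup φ)) = EphiGroup φ := by
    rw [Subgroup.map_map]
    have hid : (MulAut.conj ε).toMonoidHom.comp (MulAut.conj ε⁻¹).toMonoidHom =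
        MonoidHom.id _ := by
      apply MonoidHom.ext
      intro g
      show ε * (ε⁻¹ * g * (ε⁻¹)⁻¹) * ε⁻¹ = g
      group
    rw [hid, Subgroup.map_id]
  have hfinal : EphiGroup φ = Subgroup.map (MulAut.conj ε).toMonoidHom
      (ElemGroup (2*n-1) R) := by
    rw [← hEq, hcomp]
  rw [hfinal]
  apply le_antisymm
  · rintro _ ⟨h, hh, rfl⟩
    show (MulAut.conj ε) h ∈ ElemGroup (2*n-1) R
    have hrw : (MulAut.conj ε) h = ε * h * ε⁻¹ := rfl
    rw [hrw]
    exact Subgroup.mul_mem _ (Subgroup.mul_mem _ hεm hh) (Subgroup.inv_mem _ hεm)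
  · intro h hh
    refine ⟨ε⁻¹ * h * ε, Subgroup.mul_mem _ (Subgroup.mul_mem _ (Subgroup.inv_mem _ hεm) hh)
      hεm, ?_⟩
    show ε * (ε⁻¹ * h * ε) * ε⁻¹ = h
    group
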